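/- arXiv:cs/0503075 — 4 statements merged into one kernel-verified Lean document; each statement's English description precedes it below -/
import Mathlib

section
/- (Existence of positive equilibrium above threshold) If N·k·ρ·Σ_s h(s)·g(s) > 1 and Σ_s h(s)·g(s) > 0 with g(s) > 0 wherever h(s) > 0, then there exists n* > 0 with P̄(n*) = n*/N, where P̄(n) = Σ_s h(s)·(1 − e^{−n·k·ρ·g(s)}). -/
/-!
`P̄` is continuous, vanishes at `0`, is bounded by `1`, and has slope `k ρ ∑ h g > 1 / N` at `0`.
Hence `P̄ n - n / N` is positive for small `n > 0` and negative for large `n`, and the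
intermediate value theorem gives a positive root.
-/

open Filter Topology Finset

theorem HasDerivAt.exists_pos_mul_lt {f : ℝ → ℝ} {d c : ℝ} (hd : HasDerivAt f d 0)
    (hf0 : f 0 = 0) (hc : c < d) : ∃ x, 0 < x ∧ c * x < f x := by
  have hslope : ∀ᶠ t in 𝓝[>] (0 : ℝ), c < t⁻¹ • (f (0 + t) - f 0) :=
    hd.tendsto_slope_zero_right.eventually (lt_mem_nhds hc)
  obtain ⟨x, hx, hpos⟩ := (hslope.and self_mem_nhdsWithin).exists
  refine ⟨x, hpos, ?_⟩
  rw [zero_add, hf0, sub_zero, smul_eq_mul, lt_inv_mul_iff₀ hpos, mul_comm] at hx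
  exact hx

theorem exists_pos_eq_div_of_hasDerivAt {P : ℝ → ℝ} {d B N : ℝ} (hPc : Continuous P)
    (hP0 : P 0 = 0) (hd : HasDerivAt P d 0) (hB : ∀ x, P x ≤ B) (hN : 0 < N)
    (hdN : 1 < N * d) : ∃ n, 0 < n ∧ P n = n / N := by
  have hNd : N⁻¹ < d := by rwa [inv_lt_iff_one_lt_mul₀ hN, mul_comm]
  obtain ⟨a, ha, hPa⟩ := hd.exists_pos_mul_lt hP0 hNd
  rw [← div_eq_inv_mul] at hPa
  set b := max a (N * B) + N
  have hab : a ≤ b := by linarith [le_max_left a (N * B)]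
  have hPb : P b < b / N := by
    rw [lt_div_iff₀ hN]
    nlinarith [hB b, le_max_right a (N * B)]
  have hF : Continuous fun x => P x - x / N := hPc.sub (continuous_id.div_const N)
  obtain ⟨n, ⟨han, -⟩, hn⟩ := intermediate_value_Icc' hab hF.continuousOn
    ⟨by show P b - b / N ≤ 0; linarith, by show 0 ≤ P a - a / N; linarith⟩
  exact ⟨n, ha.trans_le han, sub_eq_zero.mp hn⟩

theorem hasDerivAt_sum_mul_one_sub_exp_neg {S : Type*} [Fintype S] (w a : S → ℝ) (x : ℝ) :
    HasDerivAt (fun n => ∑ s, w s * (1 - Real.exp (-(n * a s))))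
      (∑ s, w s * (a s * Real.exp (-(x * a s)))) x := by
  refine HasDerivAt.fun_sum fun s _ => ?_
  refine ((((hasDerivAt_mul_const (a s)).neg.exp).const_sub 1).const_mul (w s)).congr_deriv ?_
  show w s * -(Real.exp (-(x * a s)) * -a s) = _
  ring

theorem sum_mul_one_sub_exp_neg_le {S : Type*} [Fintype S] {w : S → ℝ} (hw : ∀ s, 0 ≤ w s)
    (y : S → ℝ) : ∑ s, w s * (1 - Real.exp (-y s)) ≤ ∑ s, w s :=
  sum_le_sum fun s _ => mul_le_of_le_one_right (hw s) (by linarith [Real.exp_pos (-y s)])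

theorem stmt_9_general (S : Type*) [Fintype S] (h g : S → ℝ) (N k ρ : ℝ)
    (hh : ∀ s, 0 ≤ h s) (hsum : ∑ s, h s = 1)
    (hN : 0 < N)
    (P : ℝ → ℝ) (hP : ∀ n, P n = ∑ s, h s * (1 - Real.exp (-(n * k * ρ * g s))))
    (hthr : 1 < N * k * ρ * ∑ s, h s * g s) :
    ∃ n : ℝ, 0 < n ∧ P n = n / N := by
  have hP' : P = fun n => ∑ s, h s * (1 - Real.exp (-(n * (k * ρ * g s)))) := by
    funext n
    simp only [hP, mul_assoc]
  have hderiv : HasDerivAt P (k * ρ * ∑ s, h s * g s) 0 := by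
    rw [hP']
    convert hasDerivAt_sum_mul_one_sub_exp_neg h (fun s => k * ρ * g s) 0 using 1
    simp only [zero_mul, neg_zero, Real.exp_zero, mul_one, mul_sum]
    exact sum_congr rfl fun s _ => by ring
  have hbound : ∀ n, P n ≤ 1 := fun n =>
    (hP n).trans_le ((sum_mul_one_sub_exp_neg_le hh _).trans_eq hsum)
  exact exists_pos_eq_div_of_hasDerivAt (by rw [hP']; fun_prop) (by simp [hP]) hderiv hbound hN
    (by simpa only [mul_assoc] using hthr)

theorem stmt_9 (S : Type*) [Fintype S] [Nonempty S] (h g : S → ℝ) (N k ρ : ℝ)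
    (hh : ∀ s, 0 ≤ h s) (hsum : ∑ s, h s = 1) (hg : ∀ s, 0 ≤ g s)
    (hgh : ∀ s, 0 < h s → 0 < g s)
    (hpos : 0 < ∑ s, h s * g s)
    (hN : 0 < N) (hk : 0 < k) (hρ : 0 < ρ)
    (P : ℝ → ℝ) (hP : ∀ n, P n = ∑ s, h s * (1 - Real.exp (-(n * k * ρ * g s))))
    (hthr : 1 < N * k * ρ * ∑ s, h s * g s) :
    ∃ n : ℝ, 0 < n ∧ P n = n / N :=
  stmt_9_general S h g N k ρ hh hsum hN P hP hthr
end

section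
/- The squared 2-norm of the truncated Zipf distribution, ‖g‖² = (Σ_{s=1}^{s_max} s^{−2β})/(Σ_{s=1}^{s_max} s^{−β})², is strictly increasing in β for fixed s_max ≥ 2. -/
/-!
Put `w s = s ^ (-β₁)` and `u s = s ^ (-(β₂ - β₁))`, both strictly decreasing in `s`, so that the
Zipf weights at `β₂` are `w * u`. Cauchy–Schwarz gives `(∑ w u)² ≤ (∑ w) (∑ w u²)`, and since `w`
and `u²` are similarly ordered, the weighted Chebyshev sum inequality gives the strict bound
`(∑ w²) (∑ w u²) < (∑ w) (∑ w² u²)`. Multiplying the two yields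
`(∑ w²) / (∑ w)² < (∑ (w u)²) / (∑ w u)²`.
-/

open Finset

lemma sum_sum_mul_sub_mul_sub {ι R : Type*} [CommRing R] (s : Finset ι) (w f g : ι → R) :
    ∑ i ∈ s, ∑ j ∈ s, w i * w j * ((f i - f j) * (g i - g j)) =
      2 * ((∑ i ∈ s, w i) * (∑ i ∈ s, w i * f i * g i) -
        (∑ i ∈ s, w i * f i) * ∑ i ∈ s, w i * g i) := by
  set A : ι → ι → R := fun i j ↦ w i * (w j * f j * g j) - w i * f i * (w j * g j)
  have hsplit : ∀ i j, w i * w j * ((f i - f j) * (g i - g j)) = A i j + A j i := by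
    intro i j; simp only [A]; ring
  have hA : ∑ i ∈ s, ∑ j ∈ s, A i j =
      (∑ i ∈ s, w i) * (∑ i ∈ s, w i * f i * g i) - (∑ i ∈ s, w i * f i) * ∑ i ∈ s, w i * g i := by
    simp only [A, sum_mul_sum, ← sum_sub_distrib]
  simp only [hsplit, sum_add_distrib]
  rw [sum_comm (f := fun i j ↦ A j i), hA]
  ring

section Chebyshev

variable {ι R : Type*} [LinearOrder ι] [CommRing R] [LinearOrder R] [IsStrictOrderedRing R]
  {s : Finset ι} {w f g : ι → R}

lemma StrictAntiOn.sub_mul_sub_pos {S : Set ι} (hf : StrictAntiOn f S) (hg : StrictAntiOn g S)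
    {i j : ι} (hi : i ∈ S) (hj : j ∈ S) (hij : i ≠ j) : 0 < (f i - f j) * (g i - g j) := by
  rcases hij.lt_or_gt with h | h
  · exact mul_pos (sub_pos.2 (hf hi hj h)) (sub_pos.2 (hg hi hj h))
  · exact mul_pos_of_neg_of_neg (sub_neg.2 (hf hj hi h)) (sub_neg.2 (hg hj hi h))

theorem sum_mul_sum_lt_sum_mul_sum_of_strictAntiOn (hs : s.Nontrivial) (hw : ∀ i ∈ s, 0 < w i)
    (hf : StrictAntiOn f s) (hg : StrictAntiOn g s) :
    (∑ i ∈ s, w i * f i) * (∑ i ∈ s, w i * g i) < (∑ i ∈ s, w i) * ∑ i ∈ s, w i * f i * g i := by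
  have hterm : ∀ i ∈ s, ∀ j ∈ s, 0 ≤ w i * w j * ((f i - f j) * (g i - g j)) := by
    intro i hi j hj
    obtain rfl | hij := eq_or_ne i j
    · simp
    · exact (mul_pos (mul_pos (hw i hi) (hw j hj)) (hf.sub_mul_sub_pos hg hi hj hij)).le
  obtain ⟨i, hi, j, hj, hij⟩ := hs
  have hpos : 0 < ∑ i ∈ s, ∑ j ∈ s, w i * w j * ((f i - f j) * (g i - g j)) :=
    sum_pos' (fun k hk ↦ sum_nonneg (hterm k hk)) ⟨i, hi, sum_pos' (hterm i hi)
      ⟨j, hj, mul_pos (mul_pos (hw i hi) (hw j hj)) (hf.sub_mul_sub_pos hg hi hj hij)⟩⟩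
  rw [sum_sum_mul_sub_mul_sub] at hpos
  linarith

end Chebyshev

theorem sum_sq_div_sq_sum_lt_of_strictAntiOn {ι R : Type*} [LinearOrder ι] [Field R]
    [LinearOrder R] [IsStrictOrderedRing R] {s : Finset ι} {w u : ι → R} (hs : s.Nontrivial)
    (hw : ∀ i ∈ s, 0 < w i) (hu : ∀ i ∈ s, 0 < u i) (hw' : StrictAntiOn w s)
    (hu' : StrictAntiOn u s) :
    (∑ i ∈ s, w i ^ 2) / (∑ i ∈ s, w i) ^ 2 <
      (∑ i ∈ s, (w i * u i) ^ 2) / (∑ i ∈ s, w i * u i) ^ 2 := by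
  have hu2 : StrictAntiOn (fun i ↦ u i ^ 2) s := fun i hi j hj hij ↦
    pow_lt_pow_left₀ (hu' hi hj hij) (hu j hj).le two_ne_zero
  have hW : 0 < ∑ i ∈ s, w i := sum_pos hw hs.nonempty
  have hWU : 0 < ∑ i ∈ s, w i * u i := sum_pos (fun i hi ↦ mul_pos (hw i hi) (hu i hi)) hs.nonempty
  have hcs : (∑ i ∈ s, w i * u i) ^ 2 ≤ (∑ i ∈ s, w i) * ∑ i ∈ s, w i * u i ^ 2 :=
    sum_sq_le_sum_mul_sum_of_sq_le_mul s (fun i hi ↦ (hw i hi).le)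
      (fun i hi ↦ mul_nonneg (hw i hi).le (sq_nonneg _)) (fun i _ ↦ (by ring : _ = _).le)
  have hcheb : (∑ i ∈ s, w i * w i) * (∑ i ∈ s, w i * u i ^ 2) <
      (∑ i ∈ s, w i) * ∑ i ∈ s, w i * w i * u i ^ 2 :=
    sum_mul_sum_lt_sum_mul_sum_of_strictAntiOn hs hw hw' hu2
  simp only [← sq] at hcheb
  simp only [mul_pow]
  rw [div_lt_div_iff₀ (pow_pos hW 2) (pow_pos hWU 2)]
  calc (∑ i ∈ s, w i ^ 2) * (∑ i ∈ s, w i * u i) ^ 2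
      ≤ (∑ i ∈ s, w i ^ 2) * ((∑ i ∈ s, w i) * ∑ i ∈ s, w i * u i ^ 2) := by gcongr
    _ = (∑ i ∈ s, w i ^ 2) * (∑ i ∈ s, w i * u i ^ 2) * ∑ i ∈ s, w i := by ring
    _ < (∑ i ∈ s, w i) * (∑ i ∈ s, w i ^ 2 * u i ^ 2) * ∑ i ∈ s, w i :=
        mul_lt_mul_of_pos_right hcheb hW
    _ = (∑ i ∈ s, w i ^ 2 * u i ^ 2) * (∑ i ∈ s, w i) ^ 2 := by ring

lemma strictAntiOn_natCast_rpow_neg {γ : ℝ} (hγ : 0 < γ) (n : ℕ) :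
    StrictAntiOn (fun s : ℕ ↦ (s : ℝ) ^ (-γ)) (Icc 1 n) := fun s hs t _ hst ↦
  Real.rpow_lt_rpow_of_neg (by exact_mod_cast (mem_Icc.1 hs).1) (by exact_mod_cast hst)
    (neg_neg_of_pos hγ)

lemma Real.rpow_neg_two_mul {x : ℝ} (hx : 0 ≤ x) (γ : ℝ) : x ^ (-(2 * γ)) = (x ^ (-γ)) ^ 2 := by
  rw [show -(2 * γ) = -γ * 2 by ring, Real.rpow_mul hx, Real.rpow_two]

theorem stmt_14 (smax : ℕ) (hs : 2 ≤ smax) (β₁ β₂ : ℝ)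
    (hβ₁ : 0 < β₁) (hβ₂ : β₁ < β₂) :
    (∑ s ∈ Finset.Icc 1 smax, (s : ℝ) ^ (-(2 * β₁))) /
        (∑ s ∈ Finset.Icc 1 smax, (s : ℝ) ^ (-β₁)) ^ 2 <
      (∑ s ∈ Finset.Icc 1 smax, (s : ℝ) ^ (-(2 * β₂))) /
        (∑ s ∈ Finset.Icc 1 smax, (s : ℝ) ^ (-β₂)) ^ 2 := by
  have hsplit : ∀ s : ℕ, (s : ℝ) ^ (-β₂) = (s : ℝ) ^ (-β₁) * (s : ℝ) ^ (-(β₂ - β₁)) := fun s ↦ by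
    rw [← Real.rpow_add' (Nat.cast_nonneg s) (by linarith)]; congr 1; ring
  simp only [Real.rpow_neg_two_mul (Nat.cast_nonneg _), hsplit]
  have hpos : ∀ γ : ℝ, ∀ s ∈ Icc 1 smax, 0 < (s : ℝ) ^ (-γ) := fun γ s hsm ↦
    Real.rpow_pos_of_pos (by exact_mod_cast (mem_Icc.1 hsm).1) _
  exact sum_sq_div_sq_sum_lt_of_strictAntiOn
    ⟨1, mem_Icc.2 ⟨le_rfl, by omega⟩, 2, mem_Icc.2 ⟨one_le_two, hs⟩, by norm_num⟩
    (hpos _) (hpos _) (strictAntiOn_natCast_rpow_neg hβ₁ smax)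
    (strictAntiOn_natCast_rpow_neg (sub_pos.2 hβ₂) smax)
end

section
/- The squared 2-norm ‖g‖² of the truncated Zipf distribution with exponent β > 0 is strictly decreasing in s_max; i.e., for s_max' > s_max ≥ 1, (Σ_{s=1}^{s_max'} s^{−2β})/(Σ_{s=1}^{s_max'} s^{−β})² < (Σ_{s=1}^{s_max} s^{−2β})/(Σ_{s=1}^{s_max} s^{−β})². -/
/-!
Appending a term `t` to positive weights with sums `B = ∑ aₛ` and `A = ∑ aₛ²` changes the ratio
`A / B²` to `(A + t²) / (B + t)²`, and the difference of the cross-multiplied numerators is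
`t (2AB + At − tB²)`. When the weights decrease strictly, the new term is smaller than every old
one, so `Bt < A`, which makes that factor positive: the ratio drops at every step.
-/

open Finset

lemma add_sq_div_add_sq_lt_div_sq {A B t : ℝ} (hB : 0 < B) (ht : 0 < t) (h : B * t < A) :
    (A + t ^ 2) / (B + t) ^ 2 < A / B ^ 2 := by
  rw [div_lt_div_iff₀ (by positivity) (by positivity)]
  have hA : 0 < A := lt_trans (mul_pos hB ht) h
  have hfactor : 0 < 2 * A * B + A * t - t * B ^ 2 := by
    nlinarith [mul_pos hB (sub_pos.2 h), mul_pos hA hB, mul_pos hA ht]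
  nlinarith [mul_pos ht hfactor]

noncomputable def normalizedSqNorm (f : ℕ → ℝ) (n : ℕ) : ℝ :=
  (∑ s ∈ Icc 1 n, f s ^ 2) / (∑ s ∈ Icc 1 n, f s) ^ 2

section

variable {f : ℕ → ℝ} (hpos : ∀ s, 1 ≤ s → 0 < f s) (hanti : StrictAntiOn f (Set.Ici 1))
include hpos

lemma sum_Icc_mul_lt_sum_Icc_sq {n : ℕ} {t : ℝ} (hn : 1 ≤ n) (hlt : ∀ s ∈ Icc 1 n, t < f s) :
    (∑ s ∈ Icc 1 n, f s) * t < ∑ s ∈ Icc 1 n, f s ^ 2 := by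
  rw [sum_mul]
  refine sum_lt_sum_of_nonempty ⟨1, mem_Icc.2 ⟨le_rfl, hn⟩⟩ fun s hs => ?_
  rw [sq]
  exact mul_lt_mul_of_pos_left (hlt s hs) (hpos s (mem_Icc.1 hs).1)

include hanti

lemma normalizedSqNorm_succ_lt {n : ℕ} (hn : 1 ≤ n) :
    normalizedSqNorm f (n + 1) < normalizedSqNorm f n := by
  have hlt : ∀ s ∈ Icc 1 n, f (n + 1) < f s := fun s hs =>
    hanti (mem_Icc.1 hs).1 (Nat.le_add_left 1 n) (Nat.lt_succ_of_le (mem_Icc.1 hs).2)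
  have hB : 0 < ∑ s ∈ Icc 1 n, f s :=
    sum_pos (fun s hs => hpos s (mem_Icc.1 hs).1) ⟨1, mem_Icc.2 ⟨le_rfl, hn⟩⟩
  unfold normalizedSqNorm
  rw [sum_Icc_succ_top (by omega), sum_Icc_succ_top (by omega)]
  exact add_sq_div_add_sq_lt_div_sq hB (hpos _ (by omega)) (sum_Icc_mul_lt_sum_Icc_sq hpos hn hlt)

lemma strictAntiOn_normalizedSqNorm : StrictAntiOn (normalizedSqNorm f) (Set.Ici 1) :=
  strictAntiOn_Ici_of_lt_pred fun m hm => by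
    obtain ⟨n, rfl⟩ : ∃ n, m = n + 1 := ⟨m - 1, by omega⟩
    simpa using normalizedSqNorm_succ_lt hpos hanti (n := n) (by omega)

end

theorem stmt_15 (β : ℝ) (hβ : 0 < β) (smax smax' : ℕ)
    (hs : 1 ≤ smax) (hs' : smax < smax') :
    (∑ s ∈ Finset.Icc 1 smax', (s : ℝ) ^ (-(2 * β))) /
        (∑ s ∈ Finset.Icc 1 smax', (s : ℝ) ^ (-β)) ^ 2 <
      (∑ s ∈ Finset.Icc 1 smax, (s : ℝ) ^ (-(2 * β))) /
        (∑ s ∈ Finset.Icc 1 smax, (s : ℝ) ^ (-β)) ^ 2 := by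
  have hpos : ∀ s : ℕ, 1 ≤ s → 0 < (s : ℝ) ^ (-β) := fun s hs =>
    Real.rpow_pos_of_pos (by exact_mod_cast hs) _
  have hanti : StrictAntiOn (fun s : ℕ => (s : ℝ) ^ (-β)) (Set.Ici 1) := fun a ha b _ hab =>
    Real.rpow_lt_rpow_of_neg (by exact_mod_cast ha) (by exact_mod_cast hab) (by linarith)
  have hsq : ∀ s : ℕ, (s : ℝ) ^ (-(2 * β)) = ((s : ℝ) ^ (-β)) ^ 2 := fun s => by
    rw [← Real.rpow_mul_natCast (Nat.cast_nonneg s)]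
    ring_nf
  simp only [hsq]
  exact strictAntiOn_normalizedSqNorm hpos hanti hs (hs.trans hs'.le) hs'
end

section
/- (Shift reduces inner product for positive shifts in the supply-lead case) Let g(s) = c·s^{−β} on {1,…,s_max} and h_δ(s) = c'·(s−δ)^{−β} for δ < s ≤ s_max (zero for s ≤ δ), with c, c' normalizing constants, 0 ≤ δ < s_max, β > 0. Then Σ_s h_δ(s)·g(s) is strictly smaller than Σ_s h_0(s)·g(s) = Σ_s g(s)² whenever δ ≥ 1; i.e., a positive shift strictly decreases the control parameter π = N·k·ρ·Σ_s h(s)·g(s). -/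
/-!
Write `b k = (k + 1) ^ (-β)` and `S m = b 0 + ⋯ + b (m - 1)`. Both sides are expectations of the
strictly decreasing `b`: on the left against `p j = b (j - δ) / S (n - δ)` (zero for `j < δ`),
on the right against `q j = b j / S n`. By Abel summation it suffices that the cumulative sums
of `p` lie below those of `q`, i.e. `S (k - δ) / S (n - δ) ≤ S k / S n`, strictly at `k = δ`
where the left side vanishes. This holds for every nonnegative antitone `b`, since
`k ↦ S (k - δ) / S k` is nondecreasing.
-/

open Finset

theorem sum_range_ite_le_sub {M : Type*} [AddCommMonoid M] (f : ℕ → M) (δ k : ℕ) :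
    ∑ j ∈ range k, (if δ ≤ j then f (j - δ) else 0) = ∑ i ∈ range (k - δ), f i := by
  induction k with
  | zero => simp
  | succ k ih =>
    rw [sum_range_succ, ih]
    split_ifs with h
    · rw [Nat.sub_add_comm h, sum_range_succ]
    · rw [add_zero, Nat.sub_eq_zero_of_le (by omega), Nat.sub_eq_zero_of_le (by omega)]

theorem sum_Icc_add_one_eq_sum_range {M : Type*} [AddCommMonoid M] (f : ℕ → M) (c n : ℕ) :
    ∑ s ∈ Icc (c + 1) n, f s = ∑ k ∈ range (n - c), f (k + c + 1) := by
  rw [← Ico_add_one_right_eq_Icc, sum_Ico_eq_sum_range, Nat.add_sub_add_right]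
  exact sum_congr rfl fun k _ => by rw [add_comm, add_assoc]

theorem sum_range_tsub_mul_sum_range_le {b : ℕ → ℝ} (hb0 : ∀ i, 0 ≤ b i) (hb : Antitone b)
    {δ k n : ℕ} (hkn : k ≤ n) :
    (∑ i ∈ range (k - δ), b i) * ∑ i ∈ range n, b i
      ≤ (∑ i ∈ range k, b i) * ∑ i ∈ range (n - δ), b i := by
  have hS0 : ∀ m, 0 ≤ ∑ i ∈ range m, b i := fun m => sum_nonneg fun i _ => hb0 i
  have hSmono : Monotone fun m => ∑ i ∈ range m, b i :=
    fun _ _ h => sum_le_sum_of_subset_of_nonneg (range_subset_range.mpr h) fun i _ _ => hb0 i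
  rcases le_or_gt k δ with hkδ | hδk
  · rw [Nat.sub_eq_zero_of_le hkδ, sum_range_zero, zero_mul]
    exact mul_nonneg (hS0 _) (hS0 _)
  induction n, hkn using Nat.le_induction with
  | base => rw [mul_comm]
  | succ n hkn ih =>
    have hstep : (∑ i ∈ range (k - δ), b i) * b n ≤ (∑ i ∈ range k, b i) * b (n - δ) :=
      mul_le_mul (hSmono (Nat.sub_le k δ)) (hb (Nat.sub_le n δ)) (hb0 n) (hS0 k)
    rw [sum_range_succ, Nat.sub_add_comm (by omega), sum_range_succ, mul_add, mul_add]
    linarith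

theorem sum_mul_lt_sum_mul_of_sum_range_le {p q w : ℕ → ℝ} {n k : ℕ} (hw : StrictAnti w)
    (hle : ∀ j ≤ n, ∑ i ∈ range j, p i ≤ ∑ i ∈ range j, q i)
    (htot : ∑ i ∈ range n, p i = ∑ i ∈ range n, q i)
    (hk : 0 < k) (hkn : k < n) (hlt : ∑ i ∈ range k, p i < ∑ i ∈ range k, q i) :
    ∑ i ∈ range n, p i * w i < ∑ i ∈ range n, q i * w i := by
  have hparts := sum_range_by_parts w (fun i => p i - q i) n
  simp only [smul_eq_mul, sum_sub_distrib, htot, sub_self, mul_zero, zero_sub] at hparts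
  have hpos : 0 < ∑ i ∈ range (n - 1),
      (w (i + 1) - w i) * (∑ j ∈ range (i + 1), p j - ∑ j ∈ range (i + 1), q j) := by
    refine sum_pos' (fun i hi => ?_) ⟨k - 1, mem_range.mpr (by omega), ?_⟩
    · exact mul_nonneg_of_nonpos_of_nonpos (sub_nonpos.mpr (hw.antitone (Nat.le_succ i)))
        (sub_nonpos.mpr (hle (i + 1) (by have := mem_range.mp hi; omega)))
    · rw [Nat.sub_add_cancel hk]
      exact mul_pos_of_neg_of_neg (sub_neg.mpr (hw (by omega))) (sub_neg.mpr hlt)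
  have hmul : ∀ i, w i * (p i - q i) = p i * w i - q i * w i := fun i => by ring
  simp only [hmul, sum_sub_distrib] at hparts
  linarith

theorem sum_shift_mul_lt_sum_sq {b : ℕ → ℝ} (hpos : ∀ i, 0 < b i) (hb : StrictAnti b)
    {n δ : ℕ} (hδ : 0 < δ) (hδn : δ < n) :
    ∑ j ∈ range n, (if δ ≤ j then b (j - δ) / ∑ i ∈ range (n - δ), b i else 0) *
        (b j / ∑ i ∈ range n, b i)
      < ∑ j ∈ range n, (b j / ∑ i ∈ range n, b i) ^ 2 := by
  set S : ℕ → ℝ := fun m => ∑ i ∈ range m, b i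
  have hSpos : ∀ {m}, 0 < m → 0 < S m := fun hm =>
    sum_pos (fun i _ => hpos i) (nonempty_range_iff.mpr hm.ne')
  set p : ℕ → ℝ := fun j => if δ ≤ j then b (j - δ) / S (n - δ) else 0
  set q : ℕ → ℝ := fun j => b j / S n
  have hP : ∀ k, ∑ j ∈ range k, p j = S (k - δ) / S (n - δ) := fun k => by
    have hp : ∀ j, p j = (if δ ≤ j then b (j - δ) else 0) / S (n - δ) := fun j => by
      rw [ite_div, zero_div]
    simp only [hp, ← sum_div, sum_range_ite_le_sub]
    rfl
  have hQ : ∀ k, ∑ j ∈ range k, q j = S k / S n := fun k => (sum_div ..).symm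
  have key : ∑ j ∈ range n, p j * b j < ∑ j ∈ range n, q j * b j := by
    refine sum_mul_lt_sum_mul_of_sum_range_le hb (fun k hk => ?_) ?_ hδ hδn ?_
    · rw [hP, hQ, div_le_div_iff₀ (hSpos (by omega)) (hSpos (by omega))]
      exact sum_range_tsub_mul_sum_range_le (fun i => (hpos i).le) hb.antitone hk
    · rw [hP, hQ, div_self (hSpos (by omega)).ne', div_self (hSpos (by omega)).ne']
    · rw [hP, hQ, Nat.sub_self, show S 0 = 0 from sum_range_zero b, zero_div]
      exact div_pos (hSpos hδ) (hSpos (by omega))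
  calc _ = (∑ j ∈ range n, p j * b j) / S n := by
        rw [sum_div]; exact sum_congr rfl fun j _ => (mul_div_assoc ..).symm
    _ < (∑ j ∈ range n, q j * b j) / S n := div_lt_div_of_pos_right key (hSpos (by omega))
    _ = _ := by rw [sum_div]; exact sum_congr rfl fun j _ => by ring

theorem stmt_19_general (smax δ : ℕ) (β : ℝ)
    (hδ1 : 1 ≤ δ) (hδ2 : δ < smax) (hβ : 0 < β) :
    (∑ s ∈ Finset.Icc 1 smax,
        (if δ < s then
            ((s - δ : ℕ) : ℝ) ^ (-β) /
              ∑ t ∈ Finset.Icc (δ + 1) smax, ((t - δ : ℕ) : ℝ) ^ (-β)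
          else 0) *
          ((s : ℝ) ^ (-β) / ∑ t ∈ Finset.Icc 1 smax, (t : ℝ) ^ (-β))) <
      ∑ s ∈ Finset.Icc 1 smax,
        ((s : ℝ) ^ (-β) / ∑ t ∈ Finset.Icc 1 smax, (t : ℝ) ^ (-β)) ^ 2 := by
  set b : ℕ → ℝ := fun k => ((k + 1 : ℕ) : ℝ) ^ (-β)
  have hpos : ∀ i, 0 < b i := fun i => by positivity
  have hb : StrictAnti b := fun i j hij =>
    Real.rpow_lt_rpow_of_neg (by positivity) (by exact_mod_cast Nat.succ_lt_succ hij) (by linarith)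
  have hD : ∑ t ∈ Icc (δ + 1) smax, ((t - δ : ℕ) : ℝ) ^ (-β) = ∑ i ∈ range (smax - δ), b i := by
    rw [sum_Icc_add_one_eq_sum_range]
    exact sum_congr rfl fun k _ => by rw [show k + δ + 1 - δ = k + 1 by omega]
  have hshift : ∀ k, (if δ < k + 1 then ((k + 1 - δ : ℕ) : ℝ) ^ (-β) / ∑ i ∈ range (smax - δ), b i
      else 0) = if δ ≤ k then b (k - δ) / ∑ i ∈ range (smax - δ), b i else 0 := fun k => by
    by_cases h : δ ≤ k
    · rw [if_pos (Nat.lt_succ_of_le h), if_pos h, Nat.sub_add_comm h]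
    · rw [if_neg (by omega), if_neg h]
  have hmain := sum_shift_mul_lt_sum_sq hpos hb hδ1 hδ2
  rw [hD, show Icc 1 smax = Icc (0 + 1) smax from rfl]
  simpa only [sum_Icc_add_one_eq_sum_range, add_zero, Nat.sub_zero, hshift] using hmain

theorem stmt_19 (smax δ : ℕ) (β : ℝ)
    (hs : 2 ≤ smax) (hδ1 : 1 ≤ δ) (hδ2 : δ < smax) (hβ : 0 < β) :
    (∑ s ∈ Finset.Icc 1 smax,
        (if δ < s then
            ((s - δ : ℕ) : ℝ) ^ (-β) /
              ∑ t ∈ Finset.Icc (δ + 1) smax, ((t - δ : ℕ) : ℝ) ^ (-β)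
          else 0) *
          ((s : ℝ) ^ (-β) / ∑ t ∈ Finset.Icc 1 smax, (t : ℝ) ^ (-β))) <
      ∑ s ∈ Finset.Icc 1 smax,
        ((s : ℝ) ^ (-β) / ∑ t ∈ Finset.Icc 1 smax, (t : ℝ) ^ (-β)) ^ 2 :=
  stmt_19_general smax δ β hδ1 hδ2 hβ
end
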